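/- arXiv:math/0512421 — 2 statements merged into one kernel-verified Lean document; each statement's English description precedes it below -/
import Mathlib

section
/- Let i be a function assigning to each simple graph on 10 vertices a value in {0,1}, invariant under graph isomorphism, and monotone in the sense that i(G) ≤ i(H) whenever H is a subgraph of G (equivalently, i(G) ≤ i(H) whenever there is an injective graph homomorphism from H into G). Write i_D = i(G_D) for D ⊆ {1,2,3,4,5}, and i_P = i(P), i_P̄ = i(P̄). Suppose that i_5 = 1, i_1234 = 0, and the following linear identities hold: (i) 2·i_1 + 2·i_2 − 2·i_12 − i_13 − 2·i_14 − 2·i_15 − i_24 − 2·i_25 + 2·i_123 + 2·i_124 + 2·i_125 + i_135 + 2·i_145 + i_245 − 2·i_1235 − 2·i_1245 = 0; (ii) 2·i_2 + i_13 − i_24 − 2·i_25 − 2·i_123 − i_135 + i_245 + 2·i_1235 = 0; (iii) 2·i_2 − i_24 + i_135 − 2·i_1235 = 1; (iv) i_14 = i_145; (v) i_24 + i_135 = 1. Then the vector (i_1, i_2, i_5, i_12, i_13, i_14, i_15, i_24, i_25, i_123, i_124, i_125, i_135, i_145, i_245, i_1234, i_1235, i_1245, i_P, i_P̄) equals one of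 the six vectors: (1,0,1,0,1,0,1,0,0,0,0,0,1,0,0,0,0,0,0,0), (1,1,1,1,1,1,1,0,1,1,0,1,1,1,0,0,1,0,1,1), (1,1,1,1,0,0,0,1,1,0,0,0,0,0,1,0,0,0,1,0), (1,1,1,1,0,1,1,1,1,0,1,0,0,1,1,0,0,0,1,0), (1,1,1,0,0,0,1,1,1,0,0,0,0,0,1,0,0,0,1,0), (1,1,1,1,0,1,1,1,1,0,0,1,0,1,1,0,0,0,1,0). -/
open SimpleGraph

/-- The circulant graph `G_D` on `ZMod 10`: distinct `i, j` are adjacent iff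
`i - j ∈ D` or `j - i ∈ D`. -/
def circ (D : Set (ZMod 10)) : SimpleGraph (ZMod 10) :=
  SimpleGraph.fromRel (fun i j => i - j ∈ D)

/-- The Petersen graph: vertices are the 2-element subsets of a 5-element set,
adjacent iff disjoint. -/
def petersen : SimpleGraph {s : Finset (Fin 5) // s.card = 2} where
  Adj a b := Disjoint a.1 b.1
  symm.symm a b h := h.symm
  loopless.irrefl a h := by
    have h0 : a.1 = ∅ := by simpa using disjoint_self.mp h
    have h2 := a.2
    rw [h0] at h2
    simp at h2

abbrev PV := {s : Finset (Fin 5) // s.card = 2}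

instance instCircDec (D : Set (ZMod 10)) [DecidablePred (· ∈ D)] : DecidableRel (circ D).Adj :=
  fun i j => decidable_of_iff (i ≠ j ∧ (i - j ∈ D ∨ j - i ∈ D)) Iff.rfl

instance : DecidableRel petersen.Adj := fun a b =>
  inferInstanceAs (Decidable (Disjoint a.1 b.1))

/-- enumeration of the 2-subsets of Fin 5 -/
def pv : Fin 10 → PV :=
  ![⟨{0,1}, rfl⟩, ⟨{0,2}, rfl⟩, ⟨{0,3}, rfl⟩, ⟨{0,4}, rfl⟩, ⟨{1,2}, rfl⟩,
    ⟨{1,3}, rfl⟩, ⟨{1,4}, rfl⟩, ⟨{2,3}, rfl⟩, ⟨{2,4}, rfl⟩, ⟨{3,4}, rfl⟩]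

/-- inverse enumeration -/
def pi' (a : PV) : Fin 10 :=
  if a.1 = {0,1} then 0 else if a.1 = {0,2} then 1 else if a.1 = {0,3} then 2
  else if a.1 = {0,4} then 3 else if a.1 = {1,2} then 4 else if a.1 = {1,3} then 5
  else if a.1 = {1,4} then 6 else if a.1 = {2,3} then 7 else if a.1 = {2,4} then 8 else 9

def mkHom {V W : Type} {G : SimpleGraph V} {H : SimpleGraph W} (f : V → W)
    (h : ∀ a b, G.Adj a b → H.Adj (f a) (f b)) : G →g H :=
  ⟨f, fun {a b} hab => h a b hab⟩

lemma emb_c1_c25 : ∃ f : (circ {1}) →g (circ {2, 5}), Function.Injective f := by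
  refine ⟨mkHom (fun a : ZMod 10 => (![0, 2, 4, 6, 1, 9, 7, 5, 3, 8] : Fin 10 → ZMod 10) (Fin.cast rfl a)) (by decide), by decide⟩

lemma emb_c2_P : ∃ f : (circ {2}) →g (petersen), Function.Injective f := by
  refine ⟨mkHom (fun a : ZMod 10 => pv ((![0, 1, 7, 5, 3, 8, 4, 2, 9, 6] : Fin 10 → Fin 10) a)) (by decide), by decide⟩

lemma emb_c12_c145 : ∃ f : (circ {1, 2}) →g (circ {1, 4, 5}), Function.Injective f := by
  refine ⟨mkHom (fun a : ZMod 10 => (![0, 1, 6, 2, 7, 3, 8, 4, 9, 5] : Fin 10 → ZMod 10) (Fin.cast rfl a)) (by decide), by decide⟩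

lemma emb_c13_Pc : ∃ f : (circ {1, 3}) →g (petersenᶜ), Function.Injective f := by
  refine ⟨mkHom (fun a : ZMod 10 => pv ((![0, 1, 2, 3, 8, 7, 9, 6, 4, 5] : Fin 10 → Fin 10) a)) (by decide), by decide⟩

lemma emb_c14_c124 : ∃ f : (circ {1, 4}) →g (circ {1, 2, 4}), Function.Injective f := by
  refine ⟨mkHom (fun a : ZMod 10 => (![0, 1, 2, 3, 4, 5, 6, 7, 8, 9] : Fin 10 → ZMod 10) (Fin.cast rfl a)) (by decide), by decide⟩

lemma emb_c14_c125 : ∃ f : (circ {1, 4}) →g (circ {1, 2, 5}), Function.Injective f := by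
  refine ⟨mkHom (fun a : ZMod 10 => (![0, 1, 6, 4, 2, 3, 8, 9, 7, 5] : Fin 10 → ZMod 10) (Fin.cast rfl a)) (by decide), by decide⟩

lemma emb_c15_c13 : ∃ f : (circ {1, 5}) →g (circ {1, 3}), Function.Injective f := by
  refine ⟨mkHom (fun a : ZMod 10 => (![0, 1, 2, 3, 6, 9, 8, 5, 4, 7] : Fin 10 → ZMod 10) (Fin.cast rfl a)) (by decide), by decide⟩

lemma emb_c15_c145 : ∃ f : (circ {1, 5}) →g (circ {1, 4, 5}), Function.Injective f := by
  refine ⟨mkHom (fun a : ZMod 10 => (![0, 1, 2, 3, 4, 5, 6, 7, 8, 9] : Fin 10 → ZMod 10) (Fin.cast rfl a)) (by decide), by decide⟩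

lemma emb_c25_c14 : ∃ f : (circ {2, 5}) →g (circ {1, 4}), Function.Injective f := by
  refine ⟨mkHom (fun a : ZMod 10 => (![0, 1, 4, 5, 3, 9, 2, 8, 6, 7] : Fin 10 → ZMod 10) (Fin.cast rfl a)) (by decide), by decide⟩

lemma emb_c123_c1245 : ∃ f : (circ {1, 2, 3}) →g (circ {1, 2, 4, 5}), Function.Injective f := by
  refine ⟨mkHom (fun a : ZMod 10 => (![0, 2, 4, 8, 3, 9, 7, 5, 1, 6] : Fin 10 → ZMod 10) (Fin.cast rfl a)) (by decide), by decide⟩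

lemma emb_c145_c123 : ∃ f : (circ {1, 4, 5}) →g (circ {1, 2, 3}), Function.Injective f := by
  refine ⟨mkHom (fun a : ZMod 10 => (![0, 1, 3, 5, 7, 9, 2, 4, 6, 8] : Fin 10 → ZMod 10) (Fin.cast rfl a)) (by decide), by decide⟩

lemma emb_c245_c124 : ∃ f : (circ {2, 4, 5}) →g (circ {1, 2, 4}), Function.Injective f := by
  refine ⟨mkHom (fun a : ZMod 10 => (![0, 1, 4, 5, 8, 9, 2, 3, 6, 7] : Fin 10 → ZMod 10) (Fin.cast rfl a)) (by decide), by decide⟩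

lemma emb_P_c245 : ∃ f : (petersen) →g (circ {2, 4, 5}), Function.Injective f := by
  refine ⟨mkHom (fun a : PV => ((![0, 1, 2, 3, 7, 9, 6, 8, 4, 5] : Fin 10 → ZMod 10) (pi' a))) (by decide), by decide⟩

lemma emb_P_Pc : ∃ f : (petersen) →g (petersenᶜ), Function.Injective f := by
  refine ⟨mkHom (fun a : PV => pv ((![0, 1, 5, 8, 9, 3, 7, 4, 6, 2] : Fin 10 → Fin 10) (pi' a))) (by decide), by decide⟩

lemma emb_Pc_c1235 : ∃ f : (petersenᶜ) →g (circ {1, 2, 3, 5}), Function.Injective f := by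
  refine ⟨mkHom (fun a : PV => ((![0, 1, 2, 3, 8, 7, 5, 9, 6, 4] : Fin 10 → ZMod 10) (pi' a))) (by decide), by decide⟩

lemma cardZ : Fintype.card (ZMod 10) = 10 := by decide
lemma cardP : Fintype.card PV = 10 := by decide

set_option maxHeartbeats 2000000 in
/-- Abstract version of the main theorem: any `{0,1}`-valued, isomorphism-invariant,
monotone assignment `i` on simple graphs with 10 vertices satisfying the five linear
identities (and `i₅ = 1`, `i₁₂₃₄ = 0`) has indicator vector equal to one of six columns. -/
theorem stmt_7
    (i : (V : Type) → [inst : Fintype V] → SimpleGraph V → ℤ)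
    (h01 : ∀ (V : Type) [Fintype V], Fintype.card V = 10 →
      ∀ G : SimpleGraph V, i V G = 0 ∨ i V G = 1)
    (hiso : ∀ (V W : Type) [Fintype V] [Fintype W],
      Fintype.card V = 10 → Fintype.card W = 10 →
      ∀ (G : SimpleGraph V) (H : SimpleGraph W), Nonempty (G ≃g H) → i V G = i W H)
    (hmono : ∀ (V W : Type) [Fintype V] [Fintype W],
      Fintype.card V = 10 → Fintype.card W = 10 →
      ∀ (G : SimpleGraph V) (H : SimpleGraph W),
      (∃ f : H →g G, Function.Injective f) → i V G ≤ i W H)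
    (h5 : i (ZMod 10) (circ {5}) = 1)
    (h1234 : i (ZMod 10) (circ {1, 2, 3, 4}) = 0)
    (e1 : 2 * i (ZMod 10) (circ {1}) + 2 * i (ZMod 10) (circ {2}) - 2 * i (ZMod 10) (circ {1, 2})
      - i (ZMod 10) (circ {1, 3}) - 2 * i (ZMod 10) (circ {1, 4}) - 2 * i (ZMod 10) (circ {1, 5})
      - i (ZMod 10) (circ {2, 4}) - 2 * i (ZMod 10) (circ {2, 5}) + 2 * i (ZMod 10) (circ {1, 2, 3})
      + 2 * i (ZMod 10) (circ {1, 2, 4}) + 2 * i (ZMod 10) (circ {1, 2, 5}) + i (ZMod 10) (circ {1, 3, 5})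
      + 2 * i (ZMod 10) (circ {1, 4, 5}) + i (ZMod 10) (circ {2, 4, 5})
      - 2 * i (ZMod 10) (circ {1, 2, 3, 5}) - 2 * i (ZMod 10) (circ {1, 2, 4, 5}) = 0)
    (e2 : 2 * i (ZMod 10) (circ {2}) + i (ZMod 10) (circ {1, 3}) - i (ZMod 10) (circ {2, 4})
      - 2 * i (ZMod 10) (circ {2, 5}) - 2 * i (ZMod 10) (circ {1, 2, 3}) - i (ZMod 10) (circ {1, 3, 5})
      + i (ZMod 10) (circ {2, 4, 5}) + 2 * i (ZMod 10) (circ {1, 2, 3, 5}) = 0)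
    (e3 : 2 * i (ZMod 10) (circ {2}) - i (ZMod 10) (circ {2, 4}) + i (ZMod 10) (circ {1, 3, 5})
      - 2 * i (ZMod 10) (circ {1, 2, 3, 5}) = 1)
    (e4 : i (ZMod 10) (circ {1, 4}) = i (ZMod 10) (circ {1, 4, 5}))
    (e5 : i (ZMod 10) (circ {2, 4}) + i (ZMod 10) (circ {1, 3, 5}) = 1) :
    (![i (ZMod 10) (circ {1}),
       i (ZMod 10) (circ {2}),
       i (ZMod 10) (circ {5}),
       i (ZMod 10) (circ {1, 2}),
       i (ZMod 10) (circ {1, 3}),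
       i (ZMod 10) (circ {1, 4}),
       i (ZMod 10) (circ {1, 5}),
       i (ZMod 10) (circ {2, 4}),
       i (ZMod 10) (circ {2, 5}),
       i (ZMod 10) (circ {1, 2, 3}),
       i (ZMod 10) (circ {1, 2, 4}),
       i (ZMod 10) (circ {1, 2, 5}),
       i (ZMod 10) (circ {1, 3, 5}),
       i (ZMod 10) (circ {1, 4, 5}),
       i (ZMod 10) (circ {2, 4, 5}),
       i (ZMod 10) (circ {1, 2, 3, 4}),
       i (ZMod 10) (circ {1, 2, 3, 5}),
       i (ZMod 10) (circ {1, 2, 4, 5}),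
       i {s : Finset (Fin 5) // s.card = 2} petersen,
       i {s : Finset (Fin 5) // s.card = 2} petersenᶜ] : Fin 20 → ℤ)
      = ![1, 0, 1, 0, 1, 0, 1, 0, 0, 0, 0, 0, 1, 0, 0, 0, 0, 0, 0, 0] ∨
    (![i (ZMod 10) (circ {1}),
       i (ZMod 10) (circ {2}),
       i (ZMod 10) (circ {5}),
       i (ZMod 10) (circ {1, 2}),
       i (ZMod 10) (circ {1, 3}),
       i (ZMod 10) (circ {1, 4}),
       i (ZMod 10) (circ {1, 5}),
       i (ZMod 10) (circ {2, 4}),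
       i (ZMod 10) (circ {2, 5}),
       i (ZMod 10) (circ {1, 2, 3}),
       i (ZMod 10) (circ {1, 2, 4}),
       i (ZMod 10) (circ {1, 2, 5}),
       i (ZMod 10) (circ {1, 3, 5}),
       i (ZMod 10) (circ {1, 4, 5}),
       i (ZMod 10) (circ {2, 4, 5}),
       i (ZMod 10) (circ {1, 2, 3, 4}),
       i (ZMod 10) (circ {1, 2, 3, 5}),
       i (ZMod 10) (circ {1, 2, 4, 5}),
       i {s : Finset (Fin 5) // s.card = 2} petersen,
       i {s : Finset (Fin 5) // s.card = 2} petersenᶜ] : Fin 20 → ℤ)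
      = ![1, 1, 1, 1, 1, 1, 1, 0, 1, 1, 0, 1, 1, 1, 0, 0, 1, 0, 1, 1] ∨
    (![i (ZMod 10) (circ {1}),
       i (ZMod 10) (circ {2}),
       i (ZMod 10) (circ {5}),
       i (ZMod 10) (circ {1, 2}),
       i (ZMod 10) (circ {1, 3}),
       i (ZMod 10) (circ {1, 4}),
       i (ZMod 10) (circ {1, 5}),
       i (ZMod 10) (circ {2, 4}),
       i (ZMod 10) (circ {2, 5}),
       i (ZMod 10) (circ {1, 2, 3}),
       i (ZMod 10) (circ {1, 2, 4}),
       i (ZMod 10) (circ {1, 2, 5}),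
       i (ZMod 10) (circ {1, 3, 5}),
       i (ZMod 10) (circ {1, 4, 5}),
       i (ZMod 10) (circ {2, 4, 5}),
       i (ZMod 10) (circ {1, 2, 3, 4}),
       i (ZMod 10) (circ {1, 2, 3, 5}),
       i (ZMod 10) (circ {1, 2, 4, 5}),
       i {s : Finset (Fin 5) // s.card = 2} petersen,
       i {s : Finset (Fin 5) // s.card = 2} petersenᶜ] : Fin 20 → ℤ)
      = ![1, 1, 1, 1, 0, 0, 0, 1, 1, 0, 0, 0, 0, 0, 1, 0, 0, 0, 1, 0] ∨
    (![i (ZMod 10) (circ {1}),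
       i (ZMod 10) (circ {2}),
       i (ZMod 10) (circ {5}),
       i (ZMod 10) (circ {1, 2}),
       i (ZMod 10) (circ {1, 3}),
       i (ZMod 10) (circ {1, 4}),
       i (ZMod 10) (circ {1, 5}),
       i (ZMod 10) (circ {2, 4}),
       i (ZMod 10) (circ {2, 5}),
       i (ZMod 10) (circ {1, 2, 3}),
       i (ZMod 10) (circ {1, 2, 4}),
       i (ZMod 10) (circ {1, 2, 5}),
       i (ZMod 10) (circ {1, 3, 5}),
       i (ZMod 10) (circ {1, 4, 5}),
       i (ZMod 10) (circ {2, 4, 5}),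
       i (ZMod 10) (circ {1, 2, 3, 4}),
       i (ZMod 10) (circ {1, 2, 3, 5}),
       i (ZMod 10) (circ {1, 2, 4, 5}),
       i {s : Finset (Fin 5) // s.card = 2} petersen,
       i {s : Finset (Fin 5) // s.card = 2} petersenᶜ] : Fin 20 → ℤ)
      = ![1, 1, 1, 1, 0, 1, 1, 1, 1, 0, 1, 0, 0, 1, 1, 0, 0, 0, 1, 0] ∨
    (![i (ZMod 10) (circ {1}),
       i (ZMod 10) (circ {2}),
       i (ZMod 10) (circ {5}),
       i (ZMod 10) (circ {1, 2}),
       i (ZMod 10) (circ {1, 3}),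
       i (ZMod 10) (circ {1, 4}),
       i (ZMod 10) (circ {1, 5}),
       i (ZMod 10) (circ {2, 4}),
       i (ZMod 10) (circ {2, 5}),
       i (ZMod 10) (circ {1, 2, 3}),
       i (ZMod 10) (circ {1, 2, 4}),
       i (ZMod 10) (circ {1, 2, 5}),
       i (ZMod 10) (circ {1, 3, 5}),
       i (ZMod 10) (circ {1, 4, 5}),
       i (ZMod 10) (circ {2, 4, 5}),
       i (ZMod 10) (circ {1, 2, 3, 4}),
       i (ZMod 10) (circ {1, 2, 3, 5}),
       i (ZMod 10) (circ {1, 2, 4, 5}),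
       i {s : Finset (Fin 5) // s.card = 2} petersen,
       i {s : Finset (Fin 5) // s.card = 2} petersenᶜ] : Fin 20 → ℤ)
      = ![1, 1, 1, 0, 0, 0, 1, 1, 1, 0, 0, 0, 0, 0, 1, 0, 0, 0, 1, 0] ∨
    (![i (ZMod 10) (circ {1}),
       i (ZMod 10) (circ {2}),
       i (ZMod 10) (circ {5}),
       i (ZMod 10) (circ {1, 2}),
       i (ZMod 10) (circ {1, 3}),
       i (ZMod 10) (circ {1, 4}),
       i (ZMod 10) (circ {1, 5}),
       i (ZMod 10) (circ {2, 4}),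
       i (ZMod 10) (circ {2, 5}),
       i (ZMod 10) (circ {1, 2, 3}),
       i (ZMod 10) (circ {1, 2, 4}),
       i (ZMod 10) (circ {1, 2, 5}),
       i (ZMod 10) (circ {1, 3, 5}),
       i (ZMod 10) (circ {1, 4, 5}),
       i (ZMod 10) (circ {2, 4, 5}),
       i (ZMod 10) (circ {1, 2, 3, 4}),
       i (ZMod 10) (circ {1, 2, 3, 5}),
       i (ZMod 10) (circ {1, 2, 4, 5}),
       i {s : Finset (Fin 5) // s.card = 2} petersen,
       i {s : Finset (Fin 5) // s.card = 2} petersenᶜ] : Fin 20 → ℤ)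
      = ![1, 1, 1, 1, 0, 1, 1, 1, 1, 0, 0, 1, 0, 1, 1, 0, 0, 0, 1, 0] := by
  have M0 : i (ZMod 10) (circ {2, 5}) ≤ i (ZMod 10) (circ {1}) := hmono _ _ cardZ cardZ _ _ emb_c1_c25
  have M1 : i {s : Finset (Fin 5) // s.card = 2} petersen ≤ i (ZMod 10) (circ {2}) := hmono _ _ cardP cardZ _ _ emb_c2_P
  have M2 : i (ZMod 10) (circ {1, 4, 5}) ≤ i (ZMod 10) (circ {1, 2}) := hmono _ _ cardZ cardZ _ _ emb_c12_c145
  have M3 : i {s : Finset (Fin 5) // s.card = 2} petersenᶜ ≤ i (ZMod 10) (circ {1, 3}) := hmono _ _ cardP cardZ _ _ emb_c13_Pc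
  have M4 : i (ZMod 10) (circ {1, 2, 4}) ≤ i (ZMod 10) (circ {1, 4}) := hmono _ _ cardZ cardZ _ _ emb_c14_c124
  have M5 : i (ZMod 10) (circ {1, 2, 5}) ≤ i (ZMod 10) (circ {1, 4}) := hmono _ _ cardZ cardZ _ _ emb_c14_c125
  have M6 : i (ZMod 10) (circ {1, 3}) ≤ i (ZMod 10) (circ {1, 5}) := hmono _ _ cardZ cardZ _ _ emb_c15_c13
  have M7 : i (ZMod 10) (circ {1, 4, 5}) ≤ i (ZMod 10) (circ {1, 5}) := hmono _ _ cardZ cardZ _ _ emb_c15_c145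
  have M8 : i (ZMod 10) (circ {1, 4}) ≤ i (ZMod 10) (circ {2, 5}) := hmono _ _ cardZ cardZ _ _ emb_c25_c14
  have M9 : i (ZMod 10) (circ {1, 2, 4, 5}) ≤ i (ZMod 10) (circ {1, 2, 3}) := hmono _ _ cardZ cardZ _ _ emb_c123_c1245
  have M10 : i (ZMod 10) (circ {1, 2, 3}) ≤ i (ZMod 10) (circ {1, 4, 5}) := hmono _ _ cardZ cardZ _ _ emb_c145_c123
  have M11 : i (ZMod 10) (circ {1, 2, 4}) ≤ i (ZMod 10) (circ {2, 4, 5}) := hmono _ _ cardZ cardZ _ _ emb_c245_c124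
  have M12 : i (ZMod 10) (circ {2, 4, 5}) ≤ i {s : Finset (Fin 5) // s.card = 2} petersen := hmono _ _ cardZ cardP _ _ emb_P_c245
  have M13 : i {s : Finset (Fin 5) // s.card = 2} petersenᶜ ≤ i {s : Finset (Fin 5) // s.card = 2} petersen := hmono _ _ cardP cardP _ _ emb_P_Pc
  have M14 : i (ZMod 10) (circ {1, 2, 3, 5}) ≤ i {s : Finset (Fin 5) // s.card = 2} petersenᶜ := hmono _ _ cardZ cardP _ _ emb_Pc_c1235
  have B0 : 0 ≤ i (ZMod 10) (circ {1}) ∧ i (ZMod 10) (circ {1}) ≤ 1 := by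
    rcases h01 (ZMod 10) cardZ (circ {1}) with h | h <;> omega
  have B1 : 0 ≤ i (ZMod 10) (circ {2}) ∧ i (ZMod 10) (circ {2}) ≤ 1 := by
    rcases h01 (ZMod 10) cardZ (circ {2}) with h | h <;> omega
  have B2 : 0 ≤ i (ZMod 10) (circ {5}) ∧ i (ZMod 10) (circ {5}) ≤ 1 := by
    rcases h01 (ZMod 10) cardZ (circ {5}) with h | h <;> omega
  have B3 : 0 ≤ i (ZMod 10) (circ {1, 2}) ∧ i (ZMod 10) (circ {1, 2}) ≤ 1 := by
    rcases h01 (ZMod 10) cardZ (circ {1, 2}) with h | h <;> omega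
  have B4 : 0 ≤ i (ZMod 10) (circ {1, 3}) ∧ i (ZMod 10) (circ {1, 3}) ≤ 1 := by
    rcases h01 (ZMod 10) cardZ (circ {1, 3}) with h | h <;> omega
  have B5 : 0 ≤ i (ZMod 10) (circ {1, 4}) ∧ i (ZMod 10) (circ {1, 4}) ≤ 1 := by
    rcases h01 (ZMod 10) cardZ (circ {1, 4}) with h | h <;> omega
  have B6 : 0 ≤ i (ZMod 10) (circ {1, 5}) ∧ i (ZMod 10) (circ {1, 5}) ≤ 1 := by
    rcases h01 (ZMod 10) cardZ (circ {1, 5}) with h | h <;> omega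
  have B7 : 0 ≤ i (ZMod 10) (circ {2, 4}) ∧ i (ZMod 10) (circ {2, 4}) ≤ 1 := by
    rcases h01 (ZMod 10) cardZ (circ {2, 4}) with h | h <;> omega
  have B8 : 0 ≤ i (ZMod 10) (circ {2, 5}) ∧ i (ZMod 10) (circ {2, 5}) ≤ 1 := by
    rcases h01 (ZMod 10) cardZ (circ {2, 5}) with h | h <;> omega
  have B9 : 0 ≤ i (ZMod 10) (circ {1, 2, 3}) ∧ i (ZMod 10) (circ {1, 2, 3}) ≤ 1 := by
    rcases h01 (ZMod 10) cardZ (circ {1, 2, 3}) with h | h <;> omega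
  have B10 : 0 ≤ i (ZMod 10) (circ {1, 2, 4}) ∧ i (ZMod 10) (circ {1, 2, 4}) ≤ 1 := by
    rcases h01 (ZMod 10) cardZ (circ {1, 2, 4}) with h | h <;> omega
  have B11 : 0 ≤ i (ZMod 10) (circ {1, 2, 5}) ∧ i (ZMod 10) (circ {1, 2, 5}) ≤ 1 := by
    rcases h01 (ZMod 10) cardZ (circ {1, 2, 5}) with h | h <;> omega
  have B12 : 0 ≤ i (ZMod 10) (circ {1, 3, 5}) ∧ i (ZMod 10) (circ {1, 3, 5}) ≤ 1 := by
    rcases h01 (ZMod 10) cardZ (circ {1, 3, 5}) with h | h <;> omega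
  have B13 : 0 ≤ i (ZMod 10) (circ {1, 4, 5}) ∧ i (ZMod 10) (circ {1, 4, 5}) ≤ 1 := by
    rcases h01 (ZMod 10) cardZ (circ {1, 4, 5}) with h | h <;> omega
  have B14 : 0 ≤ i (ZMod 10) (circ {2, 4, 5}) ∧ i (ZMod 10) (circ {2, 4, 5}) ≤ 1 := by
    rcases h01 (ZMod 10) cardZ (circ {2, 4, 5}) with h | h <;> omega
  have B15 : 0 ≤ i (ZMod 10) (circ {1, 2, 3, 4}) ∧ i (ZMod 10) (circ {1, 2, 3, 4}) ≤ 1 := by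
    rcases h01 (ZMod 10) cardZ (circ {1, 2, 3, 4}) with h | h <;> omega
  have B16 : 0 ≤ i (ZMod 10) (circ {1, 2, 3, 5}) ∧ i (ZMod 10) (circ {1, 2, 3, 5}) ≤ 1 := by
    rcases h01 (ZMod 10) cardZ (circ {1, 2, 3, 5}) with h | h <;> omega
  have B17 : 0 ≤ i (ZMod 10) (circ {1, 2, 4, 5}) ∧ i (ZMod 10) (circ {1, 2, 4, 5}) ≤ 1 := by
    rcases h01 (ZMod 10) cardZ (circ {1, 2, 4, 5}) with h | h <;> omega
  have B18 : 0 ≤ i {s : Finset (Fin 5) // s.card = 2} petersen ∧ i {s : Finset (Fin 5) // s.card = 2} petersen ≤ 1 := by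
    rcases h01 {s : Finset (Fin 5) // s.card = 2} cardP petersen with h | h <;> omega
  have B19 : 0 ≤ i {s : Finset (Fin 5) // s.card = 2} petersenᶜ ∧ i {s : Finset (Fin 5) // s.card = 2} petersenᶜ ≤ 1 := by
    rcases h01 {s : Finset (Fin 5) // s.card = 2} cardP petersenᶜ with h | h <;> omega
  simp only [funext_iff, Fin.forall_fin_succ, IsEmpty.forall_iff, Matrix.cons_val_zero,
    Matrix.cons_val_succ, and_true]
  rcases h01 (ZMod 10) cardZ (circ {2}) with ha | ha
  ·
    rcases h01 (ZMod 10) cardZ (circ {1, 3}) with hb | hb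
    ·
      rcases h01 (ZMod 10) cardZ (circ {1, 2}) with hc | hc
      ·
        rcases h01 (ZMod 10) cardZ (circ {1, 4}) with hd | hd
        ·
          rcases h01 (ZMod 10) cardZ (circ {1, 2, 4}) with he | he
          ·
            exact absurd B0 (by omega)
          ·
            exact absurd B0 (by omega)
        ·
          rcases h01 (ZMod 10) cardZ (circ {1, 2, 4}) with he | he
          ·
            exact absurd B0 (by omega)
          ·
            exact absurd B0 (by omega)
      ·
        rcases h01 (ZMod 10) cardZ (circ {1, 4}) with hd | hd
        ·
          rcases h01 (ZMod 10) cardZ (circ {1, 2, 4}) with he | he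
          ·
            exact absurd B0 (by omega)
          ·
            exact absurd B0 (by omega)
        ·
          rcases h01 (ZMod 10) cardZ (circ {1, 2, 4}) with he | he
          ·
            exact absurd B0 (by omega)
          ·
            exact absurd B0 (by omega)
    ·
      rcases h01 (ZMod 10) cardZ (circ {1, 2}) with hc | hc
      ·
        rcases h01 (ZMod 10) cardZ (circ {1, 4}) with hd | hd
        ·
          rcases h01 (ZMod 10) cardZ (circ {1, 2, 4}) with he | he
          ·
            exact Or.inl (by omega)
          ·
            exact absurd B0 (by omega)
        ·
          rcases h01 (ZMod 10) cardZ (circ {1, 2, 4}) with he | he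
          ·
            exact absurd B0 (by omega)
          ·
            exact absurd B0 (by omega)
      ·
        rcases h01 (ZMod 10) cardZ (circ {1, 4}) with hd | hd
        ·
          rcases h01 (ZMod 10) cardZ (circ {1, 2, 4}) with he | he
          ·
            exact absurd B0 (by omega)
          ·
            exact absurd B0 (by omega)
        ·
          rcases h01 (ZMod 10) cardZ (circ {1, 2, 4}) with he | he
          ·
            exact absurd B0 (by omega)
          ·
            exact absurd B0 (by omega)
  ·
    rcases h01 (ZMod 10) cardZ (circ {1, 3}) with hb | hb
    ·
      rcases h01 (ZMod 10) cardZ (circ {1, 2}) with hc | hc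
      ·
        rcases h01 (ZMod 10) cardZ (circ {1, 4}) with hd | hd
        ·
          rcases h01 (ZMod 10) cardZ (circ {1, 2, 4}) with he | he
          ·
            exact Or.inr (Or.inr (Or.inr (Or.inr (Or.inl (by omega)))))
          ·
            exact absurd B0 (by omega)
        ·
          rcases h01 (ZMod 10) cardZ (circ {1, 2, 4}) with he | he
          ·
            exact absurd B0 (by omega)
          ·
            exact absurd B0 (by omega)
      ·
        rcases h01 (ZMod 10) cardZ (circ {1, 4}) with hd | hd
        ·
          rcases h01 (ZMod 10) cardZ (circ {1, 2, 4}) with he | he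
          ·
            exact Or.inr (Or.inr (Or.inl (by omega)))
          ·
            exact absurd B0 (by omega)
        ·
          rcases h01 (ZMod 10) cardZ (circ {1, 2, 4}) with he | he
          ·
            exact Or.inr (Or.inr (Or.inr (Or.inr (Or.inr ((by omega))))))
          ·
            exact Or.inr (Or.inr (Or.inr (Or.inl (by omega))))
    ·
      rcases h01 (ZMod 10) cardZ (circ {1, 2}) with hc | hc
      ·
        rcases h01 (ZMod 10) cardZ (circ {1, 4}) with hd | hd
        ·
          rcases h01 (ZMod 10) cardZ (circ {1, 2, 4}) with he | he
          ·
            exact absurd B0 (by omega)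
          ·
            exact absurd B0 (by omega)
        ·
          rcases h01 (ZMod 10) cardZ (circ {1, 2, 4}) with he | he
          ·
            exact absurd B0 (by omega)
          ·
            exact absurd B0 (by omega)
      ·
        rcases h01 (ZMod 10) cardZ (circ {1, 4}) with hd | hd
        ·
          rcases h01 (ZMod 10) cardZ (circ {1, 2, 4}) with he | he
          ·
            exact absurd B0 (by omega)
          ·
            exact absurd B0 (by omega)
        ·
          rcases h01 (ZMod 10) cardZ (circ {1, 2, 4}) with he | he
          ·
            exact Or.inr (Or.inl (by omega))
          ·
            exact absurd B0 (by omega)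
end

section
/- Every nontrivial monotone graph property on 5 vertices is evasive; that is, for every family Δ of simple graphs on Fin 5 that is closed under graph isomorphism and under deletion of edges, contains the edgeless graph, and does not contain the complete graph, the simplicial complex Δ (on the vertex set of unordered pairs of distinct elements of Fin 5) is not nonevasive. -/
open SimpleGraph

/-- The edge set of a graph on a finite vertex type, as a `Finset`. -/
noncomputable def edgesOf {V : Type} [Fintype V] (G : SimpleGraph V) : Finset (Sym2 V) :=
  (Set.toFinite G.edgeSet).toFinset

/-- The link of a vertex in a simplicial complex. -/
def lk {V : Type} [DecidableEq V] (Δ : Set (Finset V)) (v : V) : Set (Finset V) :=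
  {σ | σ ∈ Δ ∧ v ∉ σ ∧ insert v σ ∈ Δ}

/-- The deletion of a vertex from a simplicial complex. -/
def dl {V : Type} (Δ : Set (Finset V)) (v : V) : Set (Finset V) :=
  {σ | σ ∈ Δ ∧ v ∉ σ}

/-- Nonevasiveness of a simplicial complex (given as its set of faces). -/
inductive Nonevasive {V : Type} [DecidableEq V] : Set (Finset V) → Prop
  | point (v : V) : Nonevasive {∅, {v}}
  | step (Δ : Set (Finset V)) (v : V) (hv : {v} ∈ Δ)
      (hlk : Nonevasive (lk Δ v)) (hdl : Nonevasive (dl Δ v)) : Nonevasive Δ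

/-- The simplicial complex (on the vertex set of unordered pairs) associated to a
family of graphs: each graph is identified with its edge set. -/
noncomputable def graphComplex {V : Type} [Fintype V] (Δ : Set (SimpleGraph V)) :
    Set (Finset (Sym2 V)) :=
  edgesOf '' Δ

/-! A nonevasive complex has vanishing Euler characteristic `∑ σ ∈ Δ, (-1) ^ #σ`, by induction
along the recursion `χ(Δ) = χ(dl Δ v) - χ(lk Δ v)`.

The rotation `u ↦ u + 1` of `Fin 5` permutes the graphs of `Δ` with order 5, so modulo 5 the sum
only sees the rotation-invariant graphs in `Δ`. These are the circulant graphs: `⊥` (always in `Δ`),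
`⊤` (never), and the pentagon and the pentagram, which are isomorphic and hence lie in `Δ`
together. Their contribution is `1` or `1 - 1 - 1 = -1`, neither divisible by 5. -/

open Finset

section EulerCharacteristic

variable {V : Type} {Δ : Set (Finset V)}

theorem IsLowerSet.dl (hΔ : IsLowerSet Δ) (v : V) : IsLowerSet (dl Δ v) :=
  fun _ _ hτσ ⟨hσ, hv⟩ => ⟨hΔ hτσ hσ, fun h => hv (hτσ h)⟩

variable [DecidableEq V]

theorem IsLowerSet.lk (hΔ : IsLowerSet Δ) (v : V) : IsLowerSet (lk Δ v) :=
  fun _ _ hτσ ⟨hσ, hv, hvσ⟩ =>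
    ⟨hΔ hτσ hσ, fun h => hv (hτσ h), hΔ (insert_subset_insert v hτσ) hvσ⟩

variable [Fintype V]

noncomputable def eulerChar (Δ : Set (Finset V)) : ℤ :=
  ∑ σ ∈ (Set.toFinite Δ).toFinset, (-1) ^ #σ

theorem eulerChar_pair (v : V) : eulerChar {∅, {v}} = 0 := by
  have hfaces : (Set.toFinite ({∅, {v}} : Set (Finset V))).toFinset = {∅, {v}} := by
    ext; simp
  rw [eulerChar, hfaces, sum_pair (singleton_ne_empty v).symm]
  simp

theorem eulerChar_eq_dl_sub_lk (hΔ : IsLowerSet Δ) (v : V) :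
    eulerChar Δ = eulerChar (dl Δ v) - eulerChar (lk Δ v) := by
  have hdl : {σ ∈ (Set.toFinite Δ).toFinset | v ∉ σ} = (Set.toFinite (dl Δ v)).toFinset := by
    ext; simp [dl]
  have hlk : {σ ∈ (Set.toFinite Δ).toFinset | v ∈ σ} =
      (Set.toFinite (lk Δ v)).toFinset.image (insert v) := by
    ext σ
    simp only [mem_filter, Set.Finite.mem_toFinset, mem_image, _root_.lk, Set.mem_ofPred_eq]
    constructor
    · rintro ⟨hσ, hv⟩
      exact ⟨σ.erase v, ⟨hΔ (erase_subset v σ) hσ, notMem_erase v σ, by rwa [insert_erase hv]⟩,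
        insert_erase hv⟩
    · rintro ⟨τ, ⟨-, -, hτ⟩, rfl⟩
      exact ⟨hτ, mem_insert_self v τ⟩
  have hinj : Set.InjOn (insert v) ((Set.toFinite (lk Δ v)).toFinset : Set (Finset V)) :=
    fun σ hσ τ hτ h => by
      simp only [Set.Finite.coe_toFinset] at hσ hτ
      rw [← erase_insert hσ.2.1, ← erase_insert hτ.2.1, h]
  rw [eulerChar, ← sum_filter_not_add_sum_filter _ (v ∈ ·), hdl, hlk, sum_image hinj,
    eulerChar, eulerChar, sub_eq_add_neg, ← sum_neg_distrib]
  congr 1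
  refine sum_congr rfl fun σ hσ => ?_
  rw [card_insert_of_notMem ((Set.Finite.mem_toFinset _).1 hσ).2.1, pow_succ]
  ring

theorem Nonevasive.eulerChar_eq_zero (h : Nonevasive Δ) (hΔ : IsLowerSet Δ) :
    eulerChar Δ = 0 := by
  induction h with
  | point v => exact eulerChar_pair v
  | step Δ v _ _ _ ihlk ihdl =>
    rw [eulerChar_eq_dl_sub_lk hΔ v, ihlk (hΔ.lk v), ihdl (hΔ.dl v), sub_zero]

end EulerCharacteristic

namespace Equiv.Perm

variable {α : Type*} [DecidableEq α] {p : ℕ} [Fact p.Prime] {σ : Perm α}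

theorem card_modEq_card_filter_fixed (hσ : σ ^ p = 1) {s : Finset α}
    (hs : ∀ x, σ x ∈ s ↔ x ∈ s) : #s ≡ #{x ∈ s | σ x = x} [MOD p] := by
  have hτ : σ.subtypePerm hs ^ p ^ 1 = 1 := by
    rw [pow_one, subtypePerm_pow]
    ext; simp [hσ]
  have hfixed :
      (σ.subtypePerm hs).supportᶜ.map (Function.Embedding.subtype _) = {x ∈ s | σ x = x} := by
    ext x; simp [and_comm]
  rw [← hfixed, card_map, ← Fintype.card_coe s]
  exact (card_compl_support_modEq hτ).symm

theorem sum_modEq_sum_filter_fixed (hσ : σ ^ p = 1) {s : Finset α}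
    (hs : ∀ x, σ x ∈ s ↔ x ∈ s) (w : α → ℤ) (hw : ∀ x, w (σ x) = w x) :
    ∑ x ∈ s, w x ≡ ∑ x ∈ s with σ x = x, w x [ZMOD p] := by
  have hfiber (s' : Finset α) (hs' : s' ⊆ s) :
      ∑ x ∈ s', w x = ∑ b ∈ s.image w, (#{x ∈ s' | w x = b} : ℤ) * b := by
    rw [← sum_fiberwise_of_maps_to (fun x hx => mem_image_of_mem w (hs' hx))]
    refine sum_congr rfl fun b _ => ?_
    rw [sum_congr rfl fun x hx => (mem_filter.1 hx).2, sum_const, nsmul_eq_mul]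
  rw [hfiber s Subset.rfl, hfiber _ (filter_subset _ s)]
  refine Int.ModEq.sum fun b _ => Int.ModEq.mul_right _ ?_
  rw [filter_comm]
  exact Int.natCast_modEq_iff.2 (card_modEq_card_filter_fixed hσ fun x => by simp [hs, hw])

end Equiv.Perm

section GraphComplex

variable {V : Type} [Fintype V]

theorem coe_edgesOf (G : SimpleGraph V) : (edgesOf G : Set (Sym2 V)) = G.edgeSet :=
  Set.Finite.coe_toFinset _

theorem edgesOf_injective : Function.Injective (edgesOf (V := V)) := fun G H h =>
  edgeSet_injective (by rw [← coe_edgesOf, h, coe_edgesOf])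

theorem edgesOf_bot : edgesOf (⊥ : SimpleGraph V) = ∅ :=
  coe_injective (by rw [coe_edgesOf, edgeSet_bot, coe_empty])

theorem SimpleGraph.Iso.card_edgesOf_eq {W : Type} [Fintype W] {G : SimpleGraph V}
    {H : SimpleGraph W} (f : G ≃g H) : #(edgesOf G) = #(edgesOf H) := by
  classical
  simp only [edgesOf, Set.Finite.toFinset_eq_toFinset]
  exact f.card_edgeFinset_eq

theorem IsLowerSet.graphComplex {Δ : Set (SimpleGraph V)} (hΔ : IsLowerSet Δ) :
    IsLowerSet (graphComplex Δ) := by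
  rintro σ τ hτσ ⟨G, hG, rfl⟩
  have hτ : (τ : Set (Sym2 V)) ⊆ G.edgeSet := by
    rw [← coe_edgesOf]; exact_mod_cast hτσ
  have hdiag : Disjoint (τ : Set (Sym2 V)) Sym2.diagSet :=
    Set.subset_compl_iff_disjoint_right.1 (hτ.trans G.edgeSet_subset_compl_diagSet)
  refine ⟨fromEdgeSet τ, hΔ ((fromEdgeSet_le G).2 (Set.sdiff_subset.trans hτ)) hG, ?_⟩
  apply coe_injective
  rw [coe_edgesOf, edgeSet_fromEdgeSet, hdiag.sdiff_eq_left]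

theorem eulerChar_graphComplex [DecidableEq V] (Δ : Set (SimpleGraph V)) :
    eulerChar (graphComplex Δ) = ∑ G ∈ (Set.toFinite Δ).toFinset, (-1) ^ #(edgesOf G) := by
  rw [eulerChar, graphComplex, Set.Finite.toFinset_image _ (Set.toFinite Δ),
    sum_image edgesOf_injective.injOn]

end GraphComplex

theorem SimpleGraph.adj_add_iff_of_adj_add_one {n : ℕ} {H : SimpleGraph (Fin (n + 1))}
    (h : ∀ u v, H.Adj (u + 1) (v + 1) ↔ H.Adj u v) (u v d : Fin (n + 1)) :
    H.Adj (u + d) (v + d) ↔ H.Adj u v := by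
  induction d using Fin.induction with
  | zero => simp
  | succ i ih => rw [← Fin.coeSucc_eq_succ, ← add_assoc, ← add_assoc, h, ih]

theorem Equiv.simpleGraph_pow {V : Type*} (e : Equiv.Perm V) (n : ℕ) :
    e.simpleGraph ^ n = (e ^ n).simpleGraph := by
  induction n with
  | zero => exact Equiv.simpleGraph_refl.symm
  | succ n ih => rw [pow_succ, pow_succ, ih]; rfl

abbrev pentagon : SimpleGraph (Fin 5) := circulantGraph {1}
abbrev pentagram : SimpleGraph (Fin 5) := circulantGraph {2}

def pentagonIsoPentagram : pentagon ≃g pentagram where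
  toFun := (2 * ·)
  invFun := (3 * ·)
  left_inv := by decide
  right_inv := by decide
  map_rel_iff' := by decide

theorem card_edgesOf_pentagon : #(edgesOf pentagon) = 5 := by
  rw [edgesOf, Set.Finite.toFinset_eq_toFinset]
  decide

theorem eq_bot_or_pentagon_or_pentagram_or_top {H : SimpleGraph (Fin 5)}
    (h : ∀ u v, H.Adj (u + 1) (v + 1) ↔ H.Adj u v) :
    H = ⊥ ∨ H = pentagon ∨ H = pentagram ∨ H = ⊤ := by
  have hadj (u v : Fin 5) : H.Adj u v ↔ H.Adj 0 (v - u) := by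
    rw [← adj_add_iff_of_adj_add_one h 0 (v - u) u]; simp
  have h41 : H.Adj 0 4 ↔ H.Adj 0 1 := (hadj 1 0).symm.trans (H.adj_comm 1 0)
  have h32 : H.Adj 0 3 ↔ H.Adj 0 2 := (hadj 2 0).symm.trans (H.adj_comm 2 0)
  have hjump (d : Fin 5) :
      H.Adj 0 d ↔ (d = 1 ∨ d = 4) ∧ H.Adj 0 1 ∨ (d = 2 ∨ d = 3) ∧ H.Adj 0 2 := by
    fin_cases d <;> simp [h41, h32]
  by_cases h1 : H.Adj 0 1 <;> by_cases h2 : H.Adj 0 2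
  · right; right; right
    ext u v
    rw [hadj, hjump]
    simp only [h1, h2, and_true, top_adj]
    revert u v
    decide
  · right; left
    ext u v
    rw [hadj, hjump]
    simp only [h1, h2, and_true, and_false, or_false]
    revert u v
    decide
  · right; right; left
    ext u v
    rw [hadj, hjump]
    simp only [h1, h2, and_true, and_false, false_or]
    revert u v
    decide
  · left
    ext u v
    rw [hadj, hjump]
    simp only [h1, h2, and_false, or_false, bot_adj]

-- `(graphRotation G).Adj u v` is definitionally `G.Adj (u + 1) (v + 1)`.
def graphRotation : Equiv.Perm (SimpleGraph (Fin 5)) := (Equiv.subRight 1).simpleGraph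

def graphRotationIso (G : SimpleGraph (Fin 5)) : graphRotation G ≃g G :=
  Iso.comap _ G

theorem graphRotation_pow_five : graphRotation ^ 5 = 1 := by
  rw [graphRotation, Equiv.simpleGraph_pow, show Equiv.subRight (1 : Fin 5) ^ 5 = 1 by decide]
  exact Equiv.simpleGraph_refl

theorem graphRotation_eq_self_iff {H : SimpleGraph (Fin 5)} :
    graphRotation H = H ↔ H = ⊥ ∨ H = pentagon ∨ H = pentagram ∨ H = ⊤ := by
  constructor
  · intro hH
    exact eq_bot_or_pentagon_or_pentagram_or_top fun u v => Iff.of_eq (congrArg (·.Adj u v) hH)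
  · rintro (rfl | rfl | rfl | rfl) <;> ext u v <;> simp [graphRotation]

open Classical in
theorem sum_filter_graphRotation_eq_self {Δ : Set (SimpleGraph (Fin 5))} (hbot : ⊥ ∈ Δ)
    (htop : ⊤ ∉ Δ) (hpentagram : pentagram ∈ Δ ↔ pentagon ∈ Δ) :
    ∑ G ∈ (Set.toFinite Δ).toFinset with graphRotation G = G, (-1 : ℤ) ^ #(edgesOf G) =
      if pentagon ∈ Δ then -1 else 1 := by
  have hfixed : {G ∈ (Set.toFinite Δ).toFinset | graphRotation G = G} =
      {G ∈ ({⊥, pentagon, pentagram} : Finset (SimpleGraph (Fin 5))) | G ∈ Δ} := by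
    ext G
    simp only [mem_filter, Set.Finite.mem_toFinset, graphRotation_eq_self_iff, mem_insert,
      mem_singleton]
    constructor
    · rintro ⟨hG, rfl | rfl | rfl | rfl⟩ <;> simp_all
    · tauto
  have hbot_ne : (⊥ : SimpleGraph (Fin 5)) ∉ ({pentagon, pentagram} : Finset _) := by
    simp only [mem_insert, mem_singleton, not_or]
    exact ⟨fun h => (by decide : ¬ (⊥ : SimpleGraph (Fin 5)).Adj 0 1) (h ▸ by decide),
      fun h => (by decide : ¬ (⊥ : SimpleGraph (Fin 5)).Adj 0 2) (h ▸ by decide)⟩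
  have hpentagon_ne : pentagon ∉ ({pentagram} : Finset _) := by
    rw [mem_singleton]
    exact fun h => (by decide : ¬ pentagram.Adj 0 1) (h ▸ by decide)
  rw [hfixed, sum_filter, sum_insert hbot_ne, sum_insert hpentagon_ne, sum_singleton,
    ← pentagonIsoPentagram.card_edgesOf_eq, card_edgesOf_pentagon, hpentagram, if_pos hbot,
    edgesOf_bot, card_empty]
  split_ifs <;> norm_num

/-- Every nontrivial monotone graph property on 5 vertices is evasive. -/
theorem stmt_8 (Δ : Set (SimpleGraph (Fin 5)))
    (hiso : ∀ G H : SimpleGraph (Fin 5), G ∈ Δ → Nonempty (G ≃g H) → H ∈ Δ)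
    (hmono : ∀ G H : SimpleGraph (Fin 5), G ∈ Δ → H ≤ G → H ∈ Δ)
    (hbot : (⊥ : SimpleGraph (Fin 5)) ∈ Δ)
    (htop : (⊤ : SimpleGraph (Fin 5)) ∉ Δ) :
    ¬ Nonevasive (graphComplex Δ) := by
  intro hΔ
  classical
  have hχ := hΔ.eulerChar_eq_zero (IsLowerSet.graphComplex fun G H hHG hG => hmono G H hG hHG)
  have hrot (G : SimpleGraph (Fin 5)) : graphRotation G ∈ Δ ↔ G ∈ Δ :=
    ⟨fun h => hiso _ _ h ⟨graphRotationIso G⟩, fun h => hiso _ _ h ⟨(graphRotationIso G).symm⟩⟩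
  have hpentagram : pentagram ∈ Δ ↔ pentagon ∈ Δ :=
    ⟨fun h => hiso _ _ h ⟨pentagonIsoPentagram.symm⟩, fun h => hiso _ _ h ⟨pentagonIsoPentagram⟩⟩
  have : Fact (Nat.Prime 5) := ⟨Nat.prime_five⟩
  have hcong := Equiv.Perm.sum_modEq_sum_filter_fixed graphRotation_pow_five
    (s := (Set.toFinite Δ).toFinset) (by simpa using hrot) (fun G => (-1 : ℤ) ^ #(edgesOf G))
    (fun G => by rw [(graphRotationIso G).card_edgesOf_eq])
  rw [← eulerChar_graphComplex, hχ, sum_filter_graphRotation_eq_self hbot htop hpentagram] at hcong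
  split_ifs at hcong <;> simp [Int.ModEq] at hcong
end
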